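/- Let ξ₀, ξ₁, …, ξ_N : ℝ⁴ → ℂ be ℝ-linear with ξᵣ(x) = kᵣx₀ + mᵣx₁ + gᵣx₂ + dᵣx₃, and suppose the coefficients satisfy B₀ − C₀ − G₀ − D₀ + 𝔪 = 0 and Bᵣ − Cᵣ − Gᵣ − Dᵣ = 0 for 1 ≤ r ≤ N, where Bᵣ = Σ_{i+j=r} kᵢkⱼ, Cᵣ = Σ_{i+j=r} mᵢmⱼ, Gᵣ = Σ_{i+j=r} gᵢgⱼ, Dᵣ = Σ_{i+j=r} dᵢdⱼ. Define Ã₀ = 1 and Ãᵣ = Σ_{j=1}^{r} (j/r)·ξⱼ·Ã_{r−j} (ordered so that Ãᵣ = ξᵣÃ₀ + ((r−1)/r)ξ_{r−1}Ã₁ + ⋯ + (1/r)ξ₁Ã_{r−1}). Then for every 0 ≤ r ≤ N, the function Uᵣ = Ãᵣ·exp(ξ₀) satisfies the Klein–Gordon equation □₄Uᵣ + 𝔪Uᵣ = 0 on ℝ⁴. -/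

import Mathlib

open Finset

/-- Second partial derivative of a `ℂ`-valued function on `ℝ⁴` in coordinate `i`. -/
noncomputable def pd2 (U : (Fin 4 → ℝ) → ℂ) (i : Fin 4) (x : Fin 4 → ℝ) : ℂ :=
  fderiv ℝ (fun y => fderiv ℝ U y (Pi.single i 1)) x (Pi.single i 1)

/-!
The recurrence says `n Ãₙ = ∑ⱼ j ξⱼ Ãₙ₋ⱼ`, i.e. `∑ Ãₙ zⁿ = exp (∑_{j ≥ 1} ξⱼ zʲ)` formally. Hence a
directional derivative `∂` with `∂ ξⱼ = κⱼ` acts on `Uₙ = Ãₙ e^{ξ₀}` as Cauchy product with `κ`: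
`∂ Uₙ = ∑_{a+b=n} κₐ U_b`, and so `∂² Uₙ = ∑_{a+b=n} (κ * κ)ₐ U_b`. Summing over the four
coordinates, `□₄ Uₙ + 𝔪 Uₙ` is the Cauchy product of `U` with the sequence `Bₐ - Cₐ - Gₐ - Dₐ + 𝔪 δₐ₀`,
which vanishes in degrees `0, …, N`.
-/

theorem sum_antidiagonal_mul_sum_antidiagonal_left_comm {R : Type*} [CommSemiring R]
    (u w z : ℕ → R) (n : ℕ) :
    ∑ p ∈ antidiagonal n, u p.1 * ∑ q ∈ antidiagonal p.2, w q.1 * z q.2 =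
      ∑ p ∈ antidiagonal n, w p.1 * ∑ q ∈ antidiagonal p.2, u q.1 * z q.2 := by
  have h := congrArg (PowerSeries.coeff n) (mul_left_comm (PowerSeries.mk u) (.mk w) (.mk z))
  simpa only [PowerSeries.coeff_mul, PowerSeries.coeff_mk] using h

theorem sum_antidiagonal_mul_sum_antidiagonal_assoc {R : Type*} [CommSemiring R]
    (u w z : ℕ → R) (n : ℕ) :
    ∑ p ∈ antidiagonal n, u p.1 * ∑ q ∈ antidiagonal p.2, w q.1 * z q.2 =
      ∑ p ∈ antidiagonal n, (∑ q ∈ antidiagonal p.1, u q.1 * w q.2) * z p.2 := by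
  have h := congrArg (PowerSeries.coeff n) (mul_assoc (PowerSeries.mk u) (.mk w) (.mk z))
  simpa only [PowerSeries.coeff_mul, PowerSeries.coeff_mk] using h.symm

theorem sum_antidiagonal_add_mul {R : Type*} [CommSemiring R] (u w : ℕ → R) (n : ℕ) :
    ∑ p ∈ antidiagonal n, ((p.1 : R) + p.2) * (u p.1 * w p.2) =
      n * ∑ p ∈ antidiagonal n, u p.1 * w p.2 := by
  rw [mul_sum]
  refine sum_congr rfl fun p hp => ?_
  rw [← mem_antidiagonal.mp hp, Nat.cast_add]

theorem sum_antidiagonal_mul_add_eq_zero {R : Type*} [CommRing R] {c u : ℕ → R} {μ : R}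
    {N r : ℕ} (h0 : c 0 + μ = 0) (h : ∀ a, 1 ≤ a → a ≤ N → c a = 0) (hr : r ≤ N) :
    ∑ p ∈ antidiagonal r, c p.1 * u p.2 + μ * u r = 0 := by
  rw [sum_eq_single_of_mem (0, r) (by simp) fun p hp hne => ?_]
  · linear_combination u r * h0
  · have hp := mem_antidiagonal.mp hp
    have hp1 : p.1 ≠ 0 := fun hp1 => hne (Prod.ext hp1 (by omega))
    rw [h p.1 (by omega) (by omega), zero_mul]

theorem natCast_mul_eq_sum_antidiagonal {K : Type*} [Field K] [CharZero K] {a X : ℕ → K}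
    (ha : ∀ r, 1 ≤ r → a r = ∑ j ∈ range r, (((r : K) - (j : K)) / (r : K)) * X (r - j) * a j)
    (n : ℕ) : n * a n = ∑ p ∈ antidiagonal n, p.1 * X p.1 * a p.2 := by
  rcases n.eq_zero_or_pos with rfl | hn
  · simp
  have hn' : (n : K) ≠ 0 := Nat.cast_ne_zero.mpr hn.ne'
  rw [ha n hn, mul_sum, ← Nat.sum_antidiagonal_swap]
  simp only [Prod.fst_swap, Prod.snd_swap]
  rw [Nat.sum_antidiagonal_eq_sum_range_succ (fun j i => (i : K) * X i * a j), sum_range_succ,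
    Nat.sub_self, Nat.cast_zero, zero_mul, zero_mul, add_zero]
  refine sum_congr rfl fun j hj => ?_
  rw [Nat.cast_sub (mem_range.mp hj).le]
  field_simp

theorem add_mul_eq_sum_antidiagonal_of_recurrence {K : Type*} [Field K] [CharZero K]
    {α δ X κ : ℕ → K}
    (hα : ∀ n, n * α n = ∑ p ∈ antidiagonal n, p.1 * X p.1 * α p.2)
    (hδ : ∀ n, n * δ n = ∑ p ∈ antidiagonal n, p.1 * (κ p.1 * α p.2 + X p.1 * δ p.2))
    (hδ0 : δ 0 = 0) (n : ℕ) :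
    δ n + κ 0 * α n = ∑ p ∈ antidiagonal n, κ p.1 * α p.2 := by
  induction n using Nat.strong_induction_on with
  | _ n ih =>
  rcases n.eq_zero_or_pos with rfl | hn
  · simp [hδ0]
  have hδ_lower : ∑ p ∈ antidiagonal n, p.1 * X p.1 * δ p.2 + κ 0 * (n * α n) =
      ∑ p ∈ antidiagonal n, p.1 * X p.1 * ∑ q ∈ antidiagonal p.2, κ q.1 * α q.2 := by
    rw [hα, mul_sum, ← sum_add_distrib]
    refine sum_congr rfl fun p hp => ?_
    -- the factor `p.1` kills the only term with `p.2 = n`, so the induction hypothesis suffices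
    rcases p.1.eq_zero_or_pos with h | h
    · simp [h]
    · rw [← ih p.2 (by have := mem_antidiagonal.mp hp; omega)]
      ring
  have hcomm : ∑ p ∈ antidiagonal n, p.1 * X p.1 * ∑ q ∈ antidiagonal p.2, κ q.1 * α q.2 =
      ∑ p ∈ antidiagonal n, p.2 * (κ p.1 * α p.2) := by
    rw [sum_antidiagonal_mul_sum_antidiagonal_left_comm (fun a => a * X a) κ α]
    simp_rw [← hα]
    exact sum_congr rfl fun p _ => by ring
  apply mul_left_cancel₀ (Nat.cast_ne_zero.mpr hn.ne' : (n : K) ≠ 0)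
  calc (n : K) * (δ n + κ 0 * α n)
      = ∑ p ∈ antidiagonal n, p.1 * (κ p.1 * α p.2)
          + (∑ p ∈ antidiagonal n, p.1 * X p.1 * δ p.2 + κ 0 * (n * α n)) := by
        rw [mul_add, hδ]
        simp only [mul_add, sum_add_distrib, mul_assoc]
        ring
    _ = ∑ p ∈ antidiagonal n, ((p.1 : K) + p.2) * (κ p.1 * α p.2) := by
        rw [hδ_lower, hcomm, ← sum_add_distrib]
        simp only [add_mul]
    _ = n * ∑ p ∈ antidiagonal n, κ p.1 * α p.2 := sum_antidiagonal_add_mul κ α n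

section Derivatives

variable {E : Type*} [NormedAddCommGroup E] [NormedSpace ℝ E]

theorem differentiable_of_recurrence {ξ A : ℕ → E → ℂ} (hξ : ∀ n, Differentiable ℝ (ξ n))
    (hA0 : Differentiable ℝ (A 0))
    (hA : ∀ r, 1 ≤ r → A r = fun x =>
      ∑ j ∈ range r, (((r : ℂ) - (j : ℂ)) / (r : ℂ)) * ξ (r - j) x * A j x)
    (n : ℕ) : Differentiable ℝ (A n) := by
  induction n using Nat.strong_induction_on with
  | _ n ih =>
  rcases n.eq_zero_or_pos with rfl | hn
  · exact hA0
  rw [hA n hn]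
  exact Differentiable.fun_sum fun j hj => ((hξ _).const_mul _).mul (ih j (mem_range.mp hj))

theorem natCast_mul_fderiv_eq_sum_antidiagonal {ξ A : ℕ → E → ℂ} (v : E)
    (hξ : ∀ n, Differentiable ℝ (ξ n)) (hA : ∀ n, Differentiable ℝ (A n))
    (hrec : ∀ n y, n * A n y = ∑ p ∈ antidiagonal n, p.1 * ξ p.1 y * A p.2 y) (n : ℕ) (y : E) :
    n * fderiv ℝ (A n) y v = ∑ p ∈ antidiagonal n,
      p.1 * (fderiv ℝ (ξ p.1) y v * A p.2 y + ξ p.1 y * fderiv ℝ (A p.2) y v) := by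
  have h := congrArg (fun f => fderiv ℝ f y v) (funext (hrec n))
  simp (disch := fun_prop) only [fderiv_const_mul, fderiv_fun_sum, fderiv_fun_mul,
    _root_.smul_apply, _root_.sum_apply, _root_.add_apply, smul_eq_mul] at h
  rw [h]
  exact sum_congr rfl fun p _ => by ring

theorem fderiv_add_mul_eq_sum_antidiagonal {ξ A : ℕ → E → ℂ} {κ : ℕ → ℂ} (v : E)
    (hξ : ∀ n, Differentiable ℝ (ξ n)) (hξv : ∀ n y, fderiv ℝ (ξ n) y v = κ n)
    (hA : ∀ n, Differentiable ℝ (A n)) (hA0 : ∀ y, fderiv ℝ (A 0) y v = 0)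
    (hrec : ∀ n y, n * A n y = ∑ p ∈ antidiagonal n, p.1 * ξ p.1 y * A p.2 y) (n : ℕ) (y : E) :
    fderiv ℝ (A n) y v + κ 0 * A n y = ∑ p ∈ antidiagonal n, κ p.1 * A p.2 y :=
  add_mul_eq_sum_antidiagonal_of_recurrence (α := (A · y)) (X := (ξ · y)) (hrec · y)
    (fun n => by simpa only [hξv] using natCast_mul_fderiv_eq_sum_antidiagonal v hξ hA hrec n y)
    (hA0 y) n

theorem fderiv_mul_cexp_eq_sum_antidiagonal {ξ A : ℕ → E → ℂ} {κ : ℕ → ℂ} (v : E)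
    (hξ : ∀ n, Differentiable ℝ (ξ n)) (hξv : ∀ n y, fderiv ℝ (ξ n) y v = κ n)
    (hA : ∀ n, Differentiable ℝ (A n)) (hA0 : ∀ y, fderiv ℝ (A 0) y v = 0)
    (hrec : ∀ n y, n * A n y = ∑ p ∈ antidiagonal n, p.1 * ξ p.1 y * A p.2 y) (n : ℕ) (y : E) :
    fderiv ℝ (fun z => A n z * Complex.exp (ξ 0 z)) y v =
      ∑ p ∈ antidiagonal n, κ p.1 * (A p.2 y * Complex.exp (ξ 0 y)) := by
  rw [fderiv_fun_mul (hA n y) (hξ 0 y).cexp, ((hξ 0 y).hasFDerivAt.cexp).fderiv]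
  simp only [_root_.add_apply, _root_.smul_apply, smul_eq_mul, hξv]
  simp only [← mul_assoc, ← sum_mul,
    ← fderiv_add_mul_eq_sum_antidiagonal v hξ hξv hA hA0 hrec n y]
  ring

theorem fderiv_fderiv_eq_sum_antidiagonal {U : ℕ → E → ℂ} {κ : ℕ → ℂ} (v : E)
    (hU : ∀ n, Differentiable ℝ (U n))
    (hUv : ∀ n y, fderiv ℝ (U n) y v = ∑ p ∈ antidiagonal n, κ p.1 * U p.2 y) (n : ℕ) (x : E) :
    fderiv ℝ (fun y => fderiv ℝ (U n) y v) x v =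
      ∑ p ∈ antidiagonal n, (∑ q ∈ antidiagonal p.1, κ q.1 * κ q.2) * U p.2 x := by
  simp (disch := fun_prop) only [hUv, fderiv_fun_sum, fderiv_const_mul, _root_.sum_apply,
    _root_.smul_apply, smul_eq_mul]
  exact sum_antidiagonal_mul_sum_antidiagonal_assoc κ κ (U · x) n

theorem fderiv_fderiv_mul_cexp_eq_sum_antidiagonal {ξ A : ℕ → E → ℂ} {κ : ℕ → ℂ} (v : E)
    (hξ : ∀ n, Differentiable ℝ (ξ n)) (hξv : ∀ n y, fderiv ℝ (ξ n) y v = κ n)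
    (hA : ∀ n, Differentiable ℝ (A n)) (hA0 : ∀ y, fderiv ℝ (A 0) y v = 0)
    (hrec : ∀ n y, n * A n y = ∑ p ∈ antidiagonal n, p.1 * ξ p.1 y * A p.2 y) (n : ℕ) (x : E) :
    fderiv ℝ (fun y => fderiv ℝ (fun z => A n z * Complex.exp (ξ 0 z)) y v) x v =
      ∑ p ∈ antidiagonal n,
        (∑ q ∈ antidiagonal p.1, κ q.1 * κ q.2) * (A p.2 x * Complex.exp (ξ 0 x)) :=
  fderiv_fderiv_eq_sum_antidiagonal (U := fun n y => A n y * Complex.exp (ξ 0 y)) v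
    (fun n => (hA n).mul (hξ 0).cexp) (fderiv_mul_cexp_eq_sum_antidiagonal v hξ hξv hA hA0 hrec)
    n x

end Derivatives

theorem fderiv_linearForm_single (a b c d : ℂ) (i : Fin 4) (y : Fin 4 → ℝ) :
    fderiv ℝ (fun x : Fin 4 → ℝ => a * (x 0 : ℂ) + b * (x 1 : ℂ) + c * (x 2 : ℂ) + d * (x 3 : ℂ))
      y (Pi.single i 1) = ![a, b, c, d] i := by
  have coord (j : Fin 4) : HasFDerivAt (fun x : Fin 4 → ℝ => (x j : ℂ))
      (Complex.ofRealCLM.comp (.proj j)) y :=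
    Complex.ofRealCLM.hasFDerivAt.comp y (hasFDerivAt_apply j y)
  rw [((((coord 0).const_mul a).fun_add ((coord 1).const_mul b)).fun_add
    ((coord 2).const_mul c)).fun_add ((coord 3).const_mul d) |>.fderiv]
  fin_cases i <;> simp

theorem stmt19 (N : ℕ) (𝔪 : ℂ) (k m g d : ℕ → ℂ)
    (ξ : ℕ → (Fin 4 → ℝ) → ℂ)
    (hξ : ∀ r, ξ r = fun x =>
      k r * (x 0 : ℂ) + m r * (x 1 : ℂ) + g r * (x 2 : ℂ) + d r * (x 3 : ℂ))
    (hchar0 : (∑ p ∈ Finset.HasAntidiagonal.antidiagonal 0, k p.1 * k p.2) -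
        (∑ p ∈ Finset.HasAntidiagonal.antidiagonal 0, m p.1 * m p.2) -
        (∑ p ∈ Finset.HasAntidiagonal.antidiagonal 0, g p.1 * g p.2) -
        (∑ p ∈ Finset.HasAntidiagonal.antidiagonal 0, d p.1 * d p.2) + 𝔪 = 0)
    (hchar : ∀ r, 1 ≤ r → r ≤ N →
      (∑ p ∈ Finset.HasAntidiagonal.antidiagonal r, k p.1 * k p.2) -
        (∑ p ∈ Finset.HasAntidiagonal.antidiagonal r, m p.1 * m p.2) -
        (∑ p ∈ Finset.HasAntidiagonal.antidiagonal r, g p.1 * g p.2) -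
        (∑ p ∈ Finset.HasAntidiagonal.antidiagonal r, d p.1 * d p.2) = 0)
    (A : ℕ → (Fin 4 → ℝ) → ℂ) (hA0 : A 0 = fun _ => 1)
    (hA : ∀ r, 1 ≤ r → A r = fun x =>
      ∑ j ∈ range r, (((r : ℂ) - (j : ℂ)) / (r : ℂ)) * ξ (r - j) x * A j x) :
    ∀ r, r ≤ N → ∀ x : Fin 4 → ℝ,
      pd2 (fun y => A r y * Complex.exp (ξ 0 y)) 0 x -
        pd2 (fun y => A r y * Complex.exp (ξ 0 y)) 1 x -
        pd2 (fun y => A r y * Complex.exp (ξ 0 y)) 2 x -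
        pd2 (fun y => A r y * Complex.exp (ξ 0 y)) 3 x +
        𝔪 * (A r x * Complex.exp (ξ 0 x)) = 0 := by
  intro r hr x
  have hξdiff : ∀ n, Differentiable ℝ (ξ n) := fun n => by rw [hξ n]; fun_prop
  have hAdiff : ∀ n, Differentiable ℝ (A n) :=
    differentiable_of_recurrence hξdiff (by rw [hA0]; fun_prop) hA
  have hrec : ∀ n y, n * A n y = ∑ p ∈ antidiagonal n, p.1 * ξ p.1 y * A p.2 y := fun n y =>
    natCast_mul_eq_sum_antidiagonal (a := (A · y)) (X := (ξ · y)) (fun s hs => by rw [hA s hs]) n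
  have hpd2 (i : Fin 4) (κ : ℕ → ℂ) (hκ : ∀ n, ![k n, m n, g n, d n] i = κ n) :
      pd2 (fun y => A r y * Complex.exp (ξ 0 y)) i x = ∑ p ∈ antidiagonal r,
        (∑ q ∈ antidiagonal p.1, κ q.1 * κ q.2) * (A p.2 x * Complex.exp (ξ 0 x)) :=
    fderiv_fderiv_mul_cexp_eq_sum_antidiagonal _ hξdiff
      (fun n y => by rw [hξ n, fderiv_linearForm_single, hκ]) hAdiff (by simp [hA0]) hrec r x
  rw [hpd2 0 k fun _ => rfl, hpd2 1 m fun _ => rfl, hpd2 2 g fun _ => rfl, hpd2 3 d fun _ => rfl]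
  simpa only [sub_mul, sum_sub_distrib] using
    sum_antidiagonal_mul_add_eq_zero (u := fun b => A b x * Complex.exp (ξ 0 x)) hchar0 hchar hr
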